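/- arXiv:2403.01550 — 2 statements merged into one kernel-verified Lean document; each statement's English description precedes it below -/
import Mathlib

section
/- Let G be a connected finite graph of genus g, T a spanning tree of G, and e₁,...,e_g the positively oriented edges of G not in T (with respect to an orientation O). Then the harmonic components φ₁(de₁),...,φ₁(de_g) of the corresponding basic 1-forms form a ℤ-basis of the dual lattice H₁(G,ℤ)^∨ = Hom(H₁(G,ℤ), ℤ) inside the space of harmonic 1-forms, dual to the basis u_i = e_i + P_i^{ab} of H₁(G,ℤ) where P_i is the path in T from e_i(1) to e_i(0). -/
/-- A finite (multi)graph, given by its set of vertices and its set of darts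
(oriented edges): each unoriented edge corresponds to a pair `{d, inv d}` of darts. -/
structure Multigraph where
  V : Type
  D : Type
  fintypeV : Fintype V
  fintypeD : Fintype D
  decEqV : DecidableEq V
  decEqD : DecidableEq D
  inv : D → D
  inv_inv : ∀ d, inv (inv d) = d
  inv_ne : ∀ d, inv d ≠ d
  head : D → V

instance (G : Multigraph) : Fintype G.V := G.fintypeV
instance (G : Multigraph) : Fintype G.D := G.fintypeD
instance (G : Multigraph) : DecidableEq G.V := G.decEqV
instance (G : Multigraph) : DecidableEq G.D := G.decEqD

namespace Multigraph

variable (G : Multigraph)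

/-- The initial vertex `d(0)` of an oriented edge. -/
def tail (d : G.D) : G.V := G.head (G.inv d)

/-- Two vertices are adjacent if some oriented edge goes from one to the other. -/
def Adj (v w : G.V) : Prop := ∃ d : G.D, G.tail d = v ∧ G.head d = w

/-- The graph is connected. -/
def Connected : Prop := Nonempty G.V ∧ ∀ v w : G.V, Relation.ReflTransGen G.Adj v w

/-- `ω` is a 1-form: it changes sign under reversal of orientation. -/
def IsOneForm (ω : G.D → ℝ) : Prop := ∀ d, ω (G.inv d) = - ω d

end Multigraph

namespace Multigraph

variable (G : Multigraph) (R : Type) [CommRing R]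

/-- The module `C₁(G,R)` of 1-chains with coefficients in `R`, realized as the
antisymmetric functions on darts (isomorphic to the free module on the positively
oriented edges for any orientation). -/
def chains : Submodule R (G.D → R) where
  carrier := {α | ∀ d, α (G.inv d) = - α d}
  add_mem' := by
    intro a b ha hb d
    simp only [Pi.add_apply, ha d, hb d]
    ring
  zero_mem' := by intro d; simp
  smul_mem' := by
    intro c a ha d
    simp only [Pi.smul_apply, smul_eq_mul, ha d]
    ring

/-- The boundary map `∂_R : C₁(G,R) → C₀(G,R)`, sending an oriented edge `e` to
`e(1) - e(0)`. -/
def boundary : (G.chains R) →ₗ[R] (G.V → R) where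
  toFun α := fun v => ∑ d ∈ Finset.univ.filter (fun d : G.D => G.head d = v), (α : G.D → R) d
  map_add' := by
    intro a b
    funext v
    simp [Finset.sum_add_distrib]
  map_smul' := by
    intro c a
    funext v
    simp [Finset.mul_sum]

/-- The genus (first Betti number) `g = m - n + 1` of the graph. -/
def genus : ℕ := Fintype.card G.D / 2 + 1 - Fintype.card G.V

end Multigraph

namespace Multigraph

variable (G : Multigraph)

/-- The set of integral 1-cycles: `H₁(G,ℤ)`, realized as antisymmetric
integer-valued functions on darts with vanishing boundary at every vertex. -/
def H1set : Set (G.D → ℤ) :=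
  {α | (∀ d, α (G.inv d) = - α d) ∧
    ∀ v : G.V, ∑ d ∈ Finset.univ.filter (fun d : G.D => G.head d = v), α d = 0}

/-- The pairing `ω(α)` between a 1-form `ω` and an integral 1-chain `α`. -/
noncomputable def pairingZ (ω : G.D → ℝ) (α : G.D → ℤ) : ℝ :=
  (1 / 2) * ∑ d : G.D, ω d * (α d : ℝ)

end Multigraph

open Multigraph

section AuxLemmas

variable (G : Multigraph)

lemma mg_sum_inv (F : G.D → ℝ) : ∑ d : G.D, F (G.inv d) = ∑ d : G.D, F d := by
  have h : Function.Involutive G.inv := G.inv_inv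
  exact Equiv.sum_comp h.toPerm F

/-- pairing of a (real) cycle with an exact form vanishes -/
lemma mg_cycle_pair_exact (β : G.D → ℝ) (hanti : ∀ d, β (G.inv d) = - β d)
    (hcyc : ∀ v : G.V, ∑ d ∈ Finset.univ.filter (fun d : G.D => G.head d = v), β d = 0)
    (f : G.V → ℝ) : ∑ d : G.D, (f (G.head d) - f (G.tail d)) * β d = 0 := by
  have hhead : ∑ d : G.D, f (G.head d) * β d = 0 := by
    rw [← Finset.sum_fiberwise Finset.univ (fun d => G.head d) (fun d => f (G.head d) * β d)]
    apply Finset.sum_eq_zero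
    intro v _
    have h1 : ∑ d ∈ Finset.univ.filter (fun d : G.D => G.head d = v), f (G.head d) * β d
        = f v * ∑ d ∈ Finset.univ.filter (fun d : G.D => G.head d = v), β d := by
      rw [Finset.mul_sum]
      apply Finset.sum_congr rfl
      intro d hd
      rw [Finset.mem_filter] at hd
      rw [hd.2]
    rw [h1, hcyc v, mul_zero]
  have htail : ∑ d : G.D, f (G.tail d) * β d = 0 := by
    have h2 : ∑ d : G.D, f (G.tail d) * β d
        = ∑ d : G.D, f (G.tail (G.inv d)) * β (G.inv d) :=
      (mg_sum_inv G (fun d => f (G.tail d) * β d)).symm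
    have h3 : ∀ d : G.D, f (G.tail (G.inv d)) * β (G.inv d) = -(f (G.head d) * β d) := by
      intro d
      rw [Multigraph.tail, G.inv_inv, hanti]
      ring
    rw [h2, Finset.sum_congr rfl (fun d _ => h3 d), Finset.sum_neg_distrib, hhead, neg_zero]
  have h4 : ∀ d : G.D, (f (G.head d) - f (G.tail d)) * β d
      = f (G.head d) * β d - f (G.tail d) * β d := fun d => by ring
  rw [Finset.sum_congr rfl (fun d _ => h4 d), Finset.sum_sub_distrib, hhead, htail, sub_zero]

/-- pairing of the basic form `da` against any function -/
lemma mg_pair_ind (a : G.D) (x : G.D → ℝ) :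
    ∑ d : G.D, (if d = a then (1:ℝ) else if d = G.inv a then -1 else 0) * x d
      = x a - x (G.inv a) := by
  have hne : G.inv a ≠ a := G.inv_ne a
  have hdec : ∀ d : G.D, (if d = a then (1:ℝ) else if d = G.inv a then -1 else 0) * x d
      = (if d = a then x d else 0) + (if d = G.inv a then - x d else 0) := by
    intro d
    by_cases h1 : d = a
    · subst h1
      rw [if_pos rfl, if_pos rfl, if_neg (fun h => hne h.symm)]
      ring
    · by_cases h2 : d = G.inv a
      · subst h2
        rw [if_neg h1, if_pos rfl, if_neg h1, if_pos rfl]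
        ring
      · rw [if_neg h1, if_neg h2, if_neg h1, if_neg h2]
        ring
  rw [Finset.sum_congr rfl (fun d _ => hdec d), Finset.sum_add_distrib,
    Finset.sum_ite_eq' Finset.univ a x, Finset.sum_ite_eq' Finset.univ (G.inv a) (fun d => - x d)]
  simp only [Finset.mem_univ, if_true]
  ring

/-- a harmonic form is a (real) cycle -/
lemma mg_harm_cycle (ζ : G.D → ℝ) (hanti : ∀ d, ζ (G.inv d) = - ζ d)
    (hharm : ∀ f : G.V → ℝ, ∑ d : G.D, (f (G.head d) - f (G.tail d)) * ζ d = 0)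
    (v : G.V) : ∑ d ∈ Finset.univ.filter (fun d : G.D => G.head d = v), ζ d = 0 := by
  have h := hharm (fun w => if w = v then 1 else 0)
  have e1 : ∑ d : G.D, (if G.head d = v then (1:ℝ) else 0) * ζ d
      = ∑ d ∈ Finset.univ.filter (fun d : G.D => G.head d = v), ζ d := by
    rw [Finset.sum_filter]
    apply Finset.sum_congr rfl
    intro d _
    split_ifs <;> ring
  have e2 : ∑ d : G.D, (if G.tail d = v then (1:ℝ) else 0) * ζ d
      = - ∑ d ∈ Finset.univ.filter (fun d : G.D => G.head d = v), ζ d := by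
    have h2 : ∑ d : G.D, (if G.tail d = v then (1:ℝ) else 0) * ζ d
        = ∑ d : G.D, (if G.tail (G.inv d) = v then (1:ℝ) else 0) * ζ (G.inv d) :=
      (mg_sum_inv G (fun d => (if G.tail d = v then (1:ℝ) else 0) * ζ d)).symm
    have h3 : ∀ d : G.D, (if G.tail (G.inv d) = v then (1:ℝ) else 0) * ζ (G.inv d)
        = - ((if G.head d = v then (1:ℝ) else 0) * ζ d) := by
      intro d
      rw [Multigraph.tail, G.inv_inv, hanti]
      ring
    rw [h2, Finset.sum_congr rfl (fun d _ => h3 d), Finset.sum_neg_distrib, e1]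
  have e3 : ∑ d : G.D, ((if G.head d = v then (1:ℝ) else 0) - (if G.tail d = v then (1:ℝ) else 0)) * ζ d
      = ∑ d : G.D, ((if G.head d = v then (1:ℝ) else 0) * ζ d)
        - ∑ d : G.D, ((if G.tail d = v then (1:ℝ) else 0) * ζ d) := by
    rw [← Finset.sum_sub_distrib]
    apply Finset.sum_congr rfl
    intro d _
    ring
  rw [e3, e1, e2] at h
  linarith

/-- linearity of the pairing in the form argument (finite sums) -/
lemma mg_pairing_sum {m : ℕ} (b : Fin m → ℝ) (η : Fin m → G.D → ℝ) (α : G.D → ℤ) :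
    G.pairingZ (fun d => ∑ i, b i * η i d) α = ∑ i, b i * G.pairingZ (η i) α := by
  unfold Multigraph.pairingZ
  have h : ∑ d : G.D, (∑ i, b i * η i d) * (α d : ℝ)
      = ∑ i, b i * ∑ d : G.D, η i d * (α d : ℝ) := by
    simp only [Finset.sum_mul]
    rw [Finset.sum_comm]
    apply Finset.sum_congr rfl
    intro i _
    rw [Finset.mul_sum]
    apply Finset.sum_congr rfl
    intro d _
    ring
  rw [h, Finset.mul_sum]
  apply Finset.sum_congr rfl
  intro i _
  ring

lemma mg_pairing_sub (ω ν : G.D → ℝ) (α : G.D → ℤ) :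
    G.pairingZ (fun d => ω d - ν d) α = G.pairingZ ω α - G.pairingZ ν α := by
  unfold Multigraph.pairingZ
  rw [← mul_sub, ← Finset.sum_sub_distrib]
  congr 1
  apply Finset.sum_congr rfl
  intro d _
  ring

end AuxLemmas

section TreeLemma

variable (G : Multigraph)

/-- a real cycle supported on a spanning tree vanishes -/
lemma mg_tree_zero (pos : G.D → Bool) (hpos : ∀ d, pos (G.inv d) = !pos d)
    (T : Finset G.D) (hTinv : ∀ d ∈ T, G.inv d ∈ T)
    (hTconn : ∀ v w : G.V,
      Relation.ReflTransGen (fun a b => ∃ d ∈ T, G.tail d = a ∧ G.head d = b) v w)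
    (hTcard : T.card = 2 * (Fintype.card G.V - 1))
    (hV : Nonempty G.V)
    (α : G.D → ℝ) (hanti : ∀ d, α (G.inv d) = - α d)
    (hsupp : ∀ d, d ∉ T → α d = 0)
    (hcyc : ∀ v : G.V, ∑ d ∈ Finset.univ.filter (fun d : G.D => G.head d = v), α d = 0) :
    α = 0 := by
  classical
  set n := Fintype.card G.V with hn
  -- the submodule of antisymmetric functions supported on T
  let W : Submodule ℝ (G.D → ℝ) :=
    { carrier := {β | (∀ d, β (G.inv d) = - β d) ∧ ∀ d ∉ T, β d = 0}
      add_mem' := by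
        rintro a b ⟨ha1, ha2⟩ ⟨hb1, hb2⟩
        refine ⟨fun d => ?_, fun d hd => ?_⟩
        · simp only [Pi.add_apply, ha1 d, hb1 d]; ring
        · simp only [Pi.add_apply, ha2 d hd, hb2 d hd, add_zero]
      zero_mem' := ⟨fun d => by simp, fun d _ => rfl⟩
      smul_mem' := by
        rintro c a ⟨ha1, ha2⟩
        refine ⟨fun d => ?_, fun d hd => ?_⟩
        · simp only [Pi.smul_apply, smul_eq_mul, ha1 d]; ring
        · simp only [Pi.smul_apply, smul_eq_mul, ha2 d hd, mul_zero] }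
  -- the boundary map on W
  let L : W →ₗ[ℝ] (G.V → ℝ) :=
    { toFun := fun β v => ∑ d ∈ Finset.univ.filter (fun d : G.D => G.head d = v), (β : G.D → ℝ) d
      map_add' := by
        intro a b
        funext v
        simp [Finset.sum_add_distrib]
      map_smul' := by
        intro c a
        funext v
        simp [Finset.mul_sum] }
  -- the positively oriented darts of T
  let S : Finset G.D := T.filter (fun d => pos d = true)
  have hScard : 2 * S.card = T.card := by
    have hcards : S.card + (T.filter fun d => ¬ (pos d = true)).card = T.card :=
      Finset.card_filter_add_card_filter_not _
    have hbij : (T.filter fun d => ¬ (pos d = true)).card = S.card := by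
      apply Finset.card_bij (fun d _ => G.inv d)
      · intro a ha
        rw [Finset.mem_filter] at ha ⊢
        refine ⟨hTinv a ha.1, ?_⟩
        rw [hpos a]
        simp only [Bool.not_eq_true] at ha
        rw [ha.2]
        rfl
      · intro a₁ _ a₂ _ h
        have := congrArg G.inv h
        rwa [G.inv_inv, G.inv_inv] at this
      · intro b hb
        rw [Finset.mem_filter] at hb
        refine ⟨G.inv b, ?_, G.inv_inv b⟩
        rw [Finset.mem_filter]
        refine ⟨hTinv b hb.1, ?_⟩
        rw [hpos b, hb.2]
        simp
    omega
  have hS : S.card = n - 1 := by omega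
  -- finrank of W is at most n - 1 via restriction to S
  have hWle : Module.finrank ℝ ↥W ≤ n - 1 := by
    let r : W →ₗ[ℝ] (↥S → ℝ) :=
      { toFun := fun β s => (β : G.D → ℝ) s.1
        map_add' := by intros; rfl
        map_smul' := by intros; rfl }
    have hker : LinearMap.ker r = ⊥ := by
      rw [LinearMap.ker_eq_bot']
      intro β hβ
      have hβ' : ∀ d ∈ S, (β : G.D → ℝ) d = 0 := by
        intro d hd
        exact congrFun hβ ⟨d, hd⟩
      apply Subtype.ext
      funext d
      show (β : G.D → ℝ) d = 0
      by_cases hdT : d ∈ T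
      · by_cases hp : pos d = true
        · exact hβ' d (Finset.mem_filter.mpr ⟨hdT, hp⟩)
        · have h1 : G.inv d ∈ S := by
            rw [Finset.mem_filter]
            refine ⟨hTinv d hdT, ?_⟩
            rw [hpos d]
            simp only [Bool.not_eq_true] at hp
            rw [hp]
            rfl
          have h2 : (β : G.D → ℝ) (G.inv d) = 0 := hβ' _ h1
          have h3 := β.2.1 (G.inv d)
          rw [G.inv_inv] at h3
          rw [h3, h2, neg_zero]
      · exact β.2.2 d hdT
    have hinj : Function.Injective r := LinearMap.ker_eq_bot.mp hker
    calc Module.finrank ℝ ↥W ≤ Module.finrank ℝ (↥S → ℝ) :=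
          LinearMap.finrank_le_finrank_of_injective hinj
      _ = S.card := by rw [Module.finrank_pi, Fintype.card_coe]
      _ = n - 1 := hS
  -- the range of L has rank at least n - 1
  obtain ⟨v₀⟩ := hV
  have hrange : ∀ v : G.V,
      (fun w => (if w = v then (1:ℝ) else 0) - (if w = v₀ then 1 else 0)) ∈ LinearMap.range L := by
    intro v
    induction hTconn v₀ v with
    | refl =>
        refine ⟨0, ?_⟩
        rw [map_zero]
        funext w
        simp
    | tail _ hbc ih =>
        rename_i b cc _
        obtain ⟨d, hdT, hdb, hdc⟩ := hbc
        obtain ⟨γ, hγ⟩ := ih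
        -- the basic chain of the dart d
        have hmem : (fun d' => if d' = d then (1:ℝ) else if d' = G.inv d then -1 else 0) ∈ W := by
          constructor
          · intro d'
            show (if G.inv d' = d then (1:ℝ) else if G.inv d' = G.inv d then -1 else 0)
              = - (if d' = d then (1:ℝ) else if d' = G.inv d then -1 else 0)
            by_cases h1 : d' = d
            · subst h1
              rw [if_neg (G.inv_ne d'), if_pos rfl, if_pos rfl]
            · by_cases h2 : d' = G.inv d
              · subst h2
                rw [G.inv_inv, if_pos rfl, if_neg h1, if_pos rfl]
                norm_num
              · rw [if_neg (fun h => h2 (by rw [← h, G.inv_inv])),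
                  if_neg (fun h => h1 (by
                    have := congrArg G.inv h
                    rwa [G.inv_inv, G.inv_inv] at this)), if_neg h1, if_neg h2]
                norm_num
          · intro d' hd'
            show (if d' = d then (1:ℝ) else if d' = G.inv d then -1 else 0) = 0
            rw [if_neg (fun h => hd' (by rw [h]; exact hdT)),
              if_neg (fun h => hd' (by rw [h]; exact hTinv d hdT))]
        refine ⟨γ + ⟨_, hmem⟩, ?_⟩
        rw [map_add, hγ]
        funext w
        have hL : (L ⟨_, hmem⟩ : G.V → ℝ) w
            = (if w = cc then (1:ℝ) else 0) - (if w = b then 1 else 0) := by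
          show ∑ d' ∈ Finset.univ.filter (fun d' : G.D => G.head d' = w),
              (if d' = d then (1:ℝ) else if d' = G.inv d then -1 else 0) = _
          have hdecmp : ∀ d' : G.D, (if d' = d then (1:ℝ) else if d' = G.inv d then -1 else 0)
              = (if d' = d then (1:ℝ) else 0) + (if d' = G.inv d then (-1:ℝ) else 0) := by
            intro d'
            by_cases h1 : d' = d
            · subst h1
              have h2 : d' ≠ G.inv d' := fun h => G.inv_ne d' h.symm
              simp [h2]
            · simp [h1]
          rw [Finset.sum_congr rfl (fun d' _ => hdecmp d'), Finset.sum_add_distrib,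
            Finset.sum_ite_eq' _ d (fun _ => (1:ℝ)), Finset.sum_ite_eq' _ (G.inv d) (fun _ => (-1:ℝ))]
          simp only [Finset.mem_filter, Finset.mem_univ, true_and]
          have hhb : G.head (G.inv d) = b := hdb
          rw [hdc, hhb]
          simp only [show (cc = w) ↔ (w = cc) from eq_comm, show (b = w) ↔ (w = b) from eq_comm]
          split_ifs <;> ring
        rw [Pi.add_apply, hL]
        ring
  -- a linearly independent family of size n-1 in the range of L
  have hnle : n - 1 ≤ Module.finrank ℝ ↥(LinearMap.range L) := by
    let gfam : {w : G.V // w ≠ v₀} → ↥(LinearMap.range L) :=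
      fun w => ⟨_, hrange (w : G.V)⟩
    have hli0 : LinearIndependent ℝ (fun w : {w : G.V // w ≠ v₀} =>
        (fun x => (if x = (w:G.V) then (1:ℝ) else 0) - (if x = v₀ then 1 else 0))) := by
      rw [Fintype.linearIndependent_iff]
      intro c hc w
      have h := congrFun hc (w : G.V)
      simp only [Finset.sum_apply, Pi.smul_apply, smul_eq_mul, Pi.zero_apply] at h
      have heval : ∀ i : {w : G.V // w ≠ v₀},
          c i * (((if (w:G.V) = (i:G.V) then (1:ℝ) else 0)) - (if (w:G.V) = v₀ then 1 else 0))
            = (if w = i then c i else 0) := by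
        intro i
        rw [if_neg w.2]
        by_cases h1 : w = i
        · rw [if_pos (by rw [h1]), sub_zero, mul_one, if_pos h1]
        · rw [if_neg (fun hh => h1 (Subtype.ext hh)), sub_zero, mul_zero, if_neg h1]
      rw [Finset.sum_congr rfl (fun i _ => heval i)] at h
      rw [Finset.sum_ite_eq Finset.univ w c] at h
      simpa using h
    have hli : LinearIndependent ℝ gfam :=
      LinearIndependent.of_comp (LinearMap.range L).subtype (by exact hli0)
    have hcard : Fintype.card {w : G.V // w ≠ v₀} = n - 1 := by
      rw [Fintype.card_subtype_compl, Fintype.card_subtype_eq]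
    rw [← hcard]
    exact hli.fintype_card_le_finrank
  -- rank-nullity forces the kernel of L to be trivial
  have hrn := LinearMap.finrank_range_add_finrank_ker L
  have hker0 : Module.finrank ℝ ↥(LinearMap.ker L) = 0 := by omega
  have hkerbot : LinearMap.ker L = ⊥ := Submodule.finrank_eq_zero.mp hker0
  -- conclude
  have hαW : α ∈ W := ⟨hanti, hsupp⟩
  have hαker : (⟨α, hαW⟩ : W) ∈ LinearMap.ker L := by
    rw [LinearMap.mem_ker]
    funext v
    exact hcyc v
  rw [hkerbot, Submodule.mem_bot] at hαker
  exact congrArg Subtype.val hαker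

end TreeLemma

/-- let `T` be a spanning tree of `G` (an inv-closed spanning connected
edge set with `n-1` edges) and `e₁, …, e_g` the positively oriented edges outside
`T`.  Let `u_i = e_i + P_i^{ab}` be the corresponding fundamental cycles
(characterized by: `u_j ∈ H₁(G,ℤ)`, coefficient `δ_{ij}` at `e_i`, and support in
`T ∪ {e_j, e_j⁻¹}`), and let `η_i = φ₁(de_i)` be the harmonic part of `de_i`
(harmonic with `de_i - η_i` exact).  Then `η_i(u_j) = δ_{ij}`, and the `η_i` form a
ℤ-basis of the dual lattice `H₁(G,ℤ)^∨` inside the harmonic 1-forms, i.e. every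
harmonic 1-form pairing integrally with all of `H₁(G,ℤ)` is a unique ℤ-linear
combination of the `η_i`. -/
theorem harmonic_projections_dual_basis (G : Multigraph) (hG : G.Connected)
    (pos : G.D → Bool) (hpos : ∀ d, pos (G.inv d) = !pos d)
    (T : Finset G.D)
    (hTinv : ∀ d ∈ T, G.inv d ∈ T)
    (hTconn : ∀ v w : G.V,
      Relation.ReflTransGen (fun a b => ∃ d ∈ T, G.tail d = a ∧ G.head d = b) v w)
    (hTcard : T.card = 2 * (Fintype.card G.V - 1))
    (e : Fin G.genus → G.D)
    (he_pos : ∀ i, pos (e i))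
    (he_nT : ∀ i, e i ∉ T)
    (he_inj : Function.Injective e)
    (he_all : ∀ d : G.D, pos d → d ∉ T → ∃ i, e i = d)
    (u : Fin G.genus → (G.D → ℤ))
    (hu_mem : ∀ j, u j ∈ G.H1set)
    (hu_coef : ∀ i j, u j (e i) = if i = j then 1 else 0)
    (hu_supp : ∀ j, ∀ d, d ∉ T → d ≠ e j → d ≠ G.inv (e j) → u j d = 0)
    (η : Fin G.genus → (G.D → ℝ))
    (hη_one : ∀ i, G.IsOneForm (η i))
    (hη_harm : ∀ i, ∀ f : G.V → ℝ,
      ∑ d : G.D, (f (G.head d) - f (G.tail d)) * η i d = 0)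
    (hη_exact : ∀ i, ∃ f : G.V → ℝ, ∀ d : G.D,
      (if d = e i then (1 : ℝ) else if d = G.inv (e i) then -1 else 0) - η i d =
        f (G.head d) - f (G.tail d)) :
    (∀ i j, G.pairingZ (η i) (u j) = if i = j then 1 else 0) ∧
    (∀ ξ : G.D → ℝ, G.IsOneForm ξ →
      (∀ f : G.V → ℝ, ∑ d : G.D, (f (G.head d) - f (G.tail d)) * ξ d = 0) →
      (∀ α ∈ G.H1set, ∃ k : ℤ, G.pairingZ ξ α = (k : ℝ)) →
      ∃! c : Fin G.genus → ℤ, ξ = fun d => ∑ i, (c i : ℝ) * η i d) := by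

  classical
  -- Part 1: η_i pairs with u_j as δ_{ij}
  have key : ∀ i j, G.pairingZ (η i) (u j) = if i = j then 1 else 0 := by
    intro i j
    obtain ⟨f, hf⟩ := hη_exact i
    have hηd : ∀ d, η i d = (if d = e i then (1:ℝ) else if d = G.inv (e i) then -1 else 0)
        - (f (G.head d) - f (G.tail d)) := by
      intro d
      have := hf d
      linarith
    have hanti : ∀ d, ((u j (G.inv d) : ℝ)) = -(u j d : ℝ) := by
      intro d
      have := (hu_mem j).1 d
      exact_mod_cast this
    have hcyc : ∀ v : G.V,
        ∑ d ∈ Finset.univ.filter (fun d : G.D => G.head d = v), ((u j d : ℝ)) = 0 := by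
      intro v
      have := (hu_mem j).2 v
      exact_mod_cast this
    have hex := mg_cycle_pair_exact G (fun d => (u j d : ℝ)) hanti hcyc f
    have hind := mg_pair_ind G (e i) (fun d => (u j d : ℝ))
    unfold Multigraph.pairingZ
    have hsum : ∑ d : G.D, η i d * (u j d : ℝ)
        = ∑ d : G.D, ((if d = e i then (1:ℝ) else if d = G.inv (e i) then -1 else 0) * (u j d : ℝ)
            - (f (G.head d) - f (G.tail d)) * (u j d : ℝ)) := by
      apply Finset.sum_congr rfl
      intro d _
      rw [hηd d]
      ring
    rw [hsum, Finset.sum_sub_distrib, hex, hind, sub_zero, hanti (e i)]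
    have h2 : (u j (e i) : ℤ) = if i = j then 1 else 0 := hu_coef i j
    rw [h2]
    split_ifs <;> norm_num
  refine ⟨key, ?_⟩
  intro ξ hξ1 hξharm hξint
  choose k hk using fun j => hξint (u j) (hu_mem j)
  -- the difference of ξ and the candidate combination
  set ζ : G.D → ℝ := fun d => ξ d - ∑ i, (k i : ℝ) * η i d with hζdef
  have hζanti : ∀ d, ζ (G.inv d) = - ζ d := by
    intro d
    simp only [hζdef]
    rw [hξ1 d]
    have h1 : ∑ i, (k i : ℝ) * η i (G.inv d) = - ∑ i, (k i : ℝ) * η i d := by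
      rw [← Finset.sum_neg_distrib]
      apply Finset.sum_congr rfl
      intro i _
      rw [hη_one i d]
      ring
    rw [h1]
    ring
  have hζharm : ∀ f : G.V → ℝ, ∑ d : G.D, (f (G.head d) - f (G.tail d)) * ζ d = 0 := by
    intro f
    have hcomb : ∑ d : G.D, (f (G.head d) - f (G.tail d)) * (∑ i, (k i : ℝ) * η i d)
        = ∑ i, (k i : ℝ) * ∑ d : G.D, (f (G.head d) - f (G.tail d)) * η i d := by
      calc ∑ d : G.D, (f (G.head d) - f (G.tail d)) * (∑ i, (k i : ℝ) * η i d)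
          = ∑ d : G.D, ∑ i, (k i : ℝ) * ((f (G.head d) - f (G.tail d)) * η i d) := by
            apply Finset.sum_congr rfl
            intro d _
            rw [Finset.mul_sum]
            apply Finset.sum_congr rfl
            intro i _
            ring
        _ = ∑ i, ∑ d : G.D, (k i : ℝ) * ((f (G.head d) - f (G.tail d)) * η i d) :=
            Finset.sum_comm
        _ = ∑ i, (k i : ℝ) * ∑ d : G.D, (f (G.head d) - f (G.tail d)) * η i d := by
            apply Finset.sum_congr rfl
            intro i _
            rw [Finset.mul_sum]
    have hsplit : ∑ d : G.D, (f (G.head d) - f (G.tail d)) * ζ d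
        = ∑ d : G.D, (f (G.head d) - f (G.tail d)) * ξ d
          - ∑ d : G.D, (f (G.head d) - f (G.tail d)) * (∑ i, (k i : ℝ) * η i d) := by
      rw [← Finset.sum_sub_distrib]
      apply Finset.sum_congr rfl
      intro d _
      simp only [hζdef]
      ring
    rw [hsplit, hξharm f, hcomb]
    have : ∀ i : Fin G.genus, (k i : ℝ) * ∑ d : G.D, (f (G.head d) - f (G.tail d)) * η i d = 0 := by
      intro i
      rw [hη_harm i f, mul_zero]
    rw [Finset.sum_congr rfl (fun i _ => this i), Finset.sum_const_zero]
    ring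
  have hζpair : ∀ j, G.pairingZ ζ (u j) = 0 := by
    intro j
    have h1 : G.pairingZ ζ (u j)
        = G.pairingZ ξ (u j) - G.pairingZ (fun d => ∑ i, (k i : ℝ) * η i d) (u j) := by
      rw [hζdef, mg_pairing_sub]
    rw [h1, hk j, mg_pairing_sum]
    have h3 : ∀ i, (k i : ℝ) * G.pairingZ (η i) (u j) = if i = j then (k i : ℝ) else 0 := by
      intro i
      rw [key i j]
      split_ifs <;> ring
    rw [Finset.sum_congr rfl (fun i _ => h3 i),
      Finset.sum_ite_eq' Finset.univ j (fun i => (k i : ℝ))]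
    simp
  have hζcyc : ∀ v : G.V, ∑ d ∈ Finset.univ.filter (fun d : G.D => G.head d = v), ζ d = 0 :=
    mg_harm_cycle G ζ hζanti hζharm
  -- the correction by fundamental cycles is supported on the tree
  set ζ' : G.D → ℝ := fun d => ζ d - ∑ i, ζ (e i) * (u i d : ℝ) with hζ'def
  have hucast : ∀ (i : Fin G.genus) d, ((u i (G.inv d) : ℝ)) = -(u i d : ℝ) := by
    intro i d
    have := (hu_mem i).1 d
    exact_mod_cast this
  have hζ'anti : ∀ d, ζ' (G.inv d) = - ζ' d := by
    intro d
    simp only [hζ'def]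
    rw [hζanti d]
    have h1 : ∑ i, ζ (e i) * (u i (G.inv d) : ℝ) = - ∑ i, ζ (e i) * (u i d : ℝ) := by
      rw [← Finset.sum_neg_distrib]
      apply Finset.sum_congr rfl
      intro i _
      rw [hucast i d]
      ring
    rw [h1]
    ring
  have hz : ∀ d, pos d = true → d ∉ T → ζ' d = 0 := by
    intro d hp hd
    obtain ⟨j, hj⟩ := he_all d hp hd
    rw [← hj]
    simp only [hζ'def]
    have h1 : ∀ i : Fin G.genus, ζ (e i) * ((u i (e j) : ℝ)) = if j = i then ζ (e i) else 0 := by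
      intro i
      rw [hu_coef j i]
      split_ifs <;> simp
    rw [Finset.sum_congr rfl (fun i _ => h1 i), Finset.sum_ite_eq Finset.univ j (fun i => ζ (e i))]
    simp
  have hζ'supp : ∀ d, d ∉ T → ζ' d = 0 := by
    intro d hd
    by_cases hp : pos d = true
    · exact hz d hp hd
    · have hdinv : G.inv d ∉ T := by
        intro h
        apply hd
        rw [← G.inv_inv d]
        exact hTinv _ h
      have hpinv : pos (G.inv d) = true := by
        rw [hpos d]
        simp only [Bool.not_eq_true] at hp
        rw [hp]
        rfl
      have := hz (G.inv d) hpinv hdinv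
      have h2 := hζ'anti (G.inv d)
      rw [G.inv_inv] at h2
      rw [h2, this, neg_zero]
  have hζ'cyc : ∀ v : G.V, ∑ d ∈ Finset.univ.filter (fun d : G.D => G.head d = v), ζ' d = 0 := by
    intro v
    have hsplit : ∑ d ∈ Finset.univ.filter (fun d : G.D => G.head d = v), ζ' d
        = ∑ d ∈ Finset.univ.filter (fun d : G.D => G.head d = v), ζ d
          - ∑ i, ζ (e i) * ∑ d ∈ Finset.univ.filter (fun d : G.D => G.head d = v), (u i d : ℝ) := by
      simp only [hζ'def]
      rw [Finset.sum_sub_distrib]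
      congr 1
      rw [Finset.sum_comm]
      apply Finset.sum_congr rfl
      intro i _
      rw [Finset.mul_sum]
    rw [hsplit, hζcyc v]
    have h1 : ∀ i : Fin G.genus,
        ∑ d ∈ Finset.univ.filter (fun d : G.D => G.head d = v), ((u i d : ℝ)) = 0 := by
      intro i
      have := (hu_mem i).2 v
      exact_mod_cast this
    rw [Finset.sum_congr rfl (fun i _ => by rw [h1 i, mul_zero])]
    simp
  have hζ'zero : ζ' = 0 :=
    mg_tree_zero G pos hpos T hTinv hTconn hTcard hG.1 ζ' hζ'anti hζ'supp hζ'cyc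
  have hrep : ∀ d, ζ d = ∑ i, ζ (e i) * (u i d : ℝ) := by
    intro d
    have h := congrFun hζ'zero d
    simp only [hζ'def, Pi.zero_apply] at h
    linarith
  have hsq : ∑ d : G.D, ζ d * ζ d = 0 := by
    have h0 : ∀ d, ζ d * ζ d = ∑ i, ζ (e i) * (ζ d * (u i d : ℝ)) := by
      intro d
      nth_rewrite 2 [hrep d]
      rw [Finset.mul_sum]
      apply Finset.sum_congr rfl
      intro i _
      ring
    calc ∑ d : G.D, ζ d * ζ d = ∑ d : G.D, ∑ i, ζ (e i) * (ζ d * (u i d : ℝ)) :=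
          Finset.sum_congr rfl (fun d _ => h0 d)
      _ = ∑ i, ∑ d : G.D, ζ (e i) * (ζ d * (u i d : ℝ)) := Finset.sum_comm
      _ = ∑ i, ζ (e i) * ∑ d : G.D, ζ d * (u i d : ℝ) := by
          apply Finset.sum_congr rfl
          intro i _
          rw [Finset.mul_sum]
      _ = 0 := by
          apply Finset.sum_eq_zero
          intro i _
          have hp := hζpair i
          unfold Multigraph.pairingZ at hp
          have hs : ∑ d : G.D, ζ d * (u i d : ℝ) = 0 := by linarith
          rw [hs, mul_zero]
  have hzero : ∀ d, ζ d = 0 := by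
    intro d
    have h1 := (Finset.sum_eq_zero_iff_of_nonneg
      (fun d _ => mul_self_nonneg (ζ d))).mp hsq d (Finset.mem_univ d)
    exact mul_self_eq_zero.mp h1
  refine ⟨k, ?_, ?_⟩
  · funext d
    have h := hzero d
    simp only [hζdef] at h
    show ξ d = ∑ i, (k i : ℝ) * η i d
    linarith
  · intro y hy
    funext j
    have h1 : G.pairingZ ξ (u j) = (y j : ℝ) := by
      rw [hy, mg_pairing_sum]
      have h3 : ∀ i, (y i : ℝ) * G.pairingZ (η i) (u j) = if i = j then (y i : ℝ) else 0 := by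
        intro i
        rw [key i j]
        split_ifs <;> ring
      rw [Finset.sum_congr rfl (fun i _ => h3 i),
        Finset.sum_ite_eq' Finset.univ j (fun i => (y i : ℝ))]
      simp
    have h2 := hk j
    rw [h1] at h2
    exact_mod_cast h2
end

section
/- Let G be a connected finite graph of genus at least 2. Then G contains a unique subgraph G' of the same genus such that G' is edge-walk-connected, i.e., for every pair of oriented edges e, e' of G' there exists a non-backtracking edge-walk from e to e'. -/
namespace Multigraph

variable (G : Multigraph)

/-- A dart set `S` (closed under reversal) is edge-walk-connected if any two
darts of `S` are joined by a non-backtracking edge-walk staying in `S`. -/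
def EdgeWalkConnected (S : Finset G.D) : Prop :=
  ∀ e ∈ S, ∀ e' ∈ S, ∃ w : List G.D,
    (∀ d ∈ w, d ∈ S) ∧
    w.head? = some e ∧ w.getLast? = some e' ∧
    List.Chain' (fun a b => G.tail b = G.head a ∧ b ≠ G.inv a) w

/-- The genus of the graph, as an integer: `g = m - n + 1`. -/
def genusZ : ℤ := (Fintype.card G.D : ℤ) / 2 - (Fintype.card G.V : ℤ) + 1

/-- The genus of the subgraph spanned by an inv-closed dart set `S`: its number
of edges minus its number of incident vertices plus one. -/
def subGenusZ (S : Finset G.D) : ℤ :=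
  (S.card : ℤ) / 2 - ((S.image G.head).card : ℤ) + 1

end Multigraph

open Multigraph

namespace MGAux

variable {G : Multigraph}

/-- inv-closed dart sets -/
def InvCl (G : Multigraph) (S : Finset G.D) : Prop := ∀ d ∈ S, G.inv d ∈ S

/-- adjacency within `S` -/
def AdjS (G : Multigraph) (S : Finset G.D) (v w : G.V) : Prop :=
  ∃ d ∈ S, G.tail d = v ∧ G.head d = w

/-- the subgraph spanned by `S` is connected -/
def ConnS (G : Multigraph) (S : Finset G.D) : Prop :=
  ∀ v ∈ S.image G.head, ∀ w ∈ S.image G.head, Relation.ReflTransGen (AdjS G S) v w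

/-- one non-backtracking step within `S` -/
def Step (G : Multigraph) (S : Finset G.D) (a b : G.D) : Prop :=
  b ∈ S ∧ G.tail b = G.head a ∧ b ≠ G.inv a

/-- degree of a vertex in `S` -/
def degS (G : Multigraph) (S : Finset G.D) (v : G.V) : ℕ :=
  (S.filter (fun d => G.head d = v)).card

/-- minimum degree 2 on incident vertices -/
def MinDeg2 (G : Multigraph) (S : Finset G.D) : Prop :=
  ∀ v ∈ S.image G.head, 2 ≤ degS G S v

/-- a "good" set: inv-closed and every dart has a non-backtracking continuation -/
def Good (G : Multigraph) (S : Finset G.D) : Prop :=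
  InvCl G S ∧ ∀ d ∈ S, ∃ d' ∈ S, G.tail d' = G.head d ∧ d' ≠ G.inv d

lemma tail_inv (d : G.D) : G.tail (G.inv d) = G.head d := by
  simp [Multigraph.tail, G.inv_inv]

lemma head_inv (d : G.D) : G.head (G.inv d) = G.tail d := rfl

lemma inv_injective : Function.Injective G.inv := by
  intro a b h
  have := congrArg G.inv h
  simpa [G.inv_inv] using this

/-- reversal of a step -/
lemma step_rev {S : Finset G.D} (hS : InvCl G S) {a b : G.D} (ha : a ∈ S)
    (h : Step G S a b) : Step G S (G.inv b) (G.inv a) := by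
  obtain ⟨hb, ht, hne⟩ := h
  refine ⟨hS a ha, ?_, ?_⟩
  · rw [tail_inv, head_inv, ht]
  · intro hc
    rw [G.inv_inv] at hc
    exact hne hc.symm

/-- targets of steps are in S -/
lemma reach_mem {S : Finset G.D} {e f : G.D} (he : e ∈ S)
    (h : Relation.ReflTransGen (Step G S) e f) : f ∈ S := by
  induction h with
  | refl => exact he
  | tail _ hstep _ => exact hstep.1

/-- reversal of a reachability -/
lemma reach_rev {S : Finset G.D} (hS : InvCl G S) {e f : G.D} (he : e ∈ S)
    (h : Relation.ReflTransGen (Step G S) e f) :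
    Relation.ReflTransGen (Step G S) (G.inv f) (G.inv e) := by
  induction h with
  | refl => exact .refl
  | @tail b c hab hbc ih =>
      exact .head (step_rev hS (reach_mem he hab) hbc) ih

/-- reachability gives an actual walk list -/
lemma reach_to_walk {S : Finset G.D} {e f : G.D} (he : e ∈ S)
    (h : Relation.ReflTransGen (Step G S) e f) :
    ∃ w : List G.D, (∀ d ∈ w, d ∈ S) ∧
      w.head? = some e ∧ w.getLast? = some f ∧
      List.Chain' (fun a b => G.tail b = G.head a ∧ b ≠ G.inv a) w := by
  induction h with
  | refl => exact ⟨[e], by simpa using he, rfl, rfl, List.isChain_singleton _⟩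
  | @tail b c hab hbc ih =>
      obtain ⟨w, hmem, hhead, hlast, hchain⟩ := ih
      refine ⟨w ++ [c], ?_, ?_, ?_, ?_⟩
      · intro d hd
        rcases List.mem_append.1 hd with h1 | h1
        · exact hmem d h1
        · simp at h1; subst h1; exact hbc.1
      · have : w ≠ [] := by
          intro h0; rw [h0] at hhead; simp at hhead
        rw [List.head?_append_of_ne_nil _ this]
        exact hhead
      · simp
      · refine List.isChain_append.2 ?_
        refine ⟨hchain, by simp, ?_⟩
        intro x hx y hy
        rw [hlast] at hx
        simp at hx hy
        subst hx; subst hy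
        exact ⟨hbc.2.1, hbc.2.2⟩

/-- continuation exists when min degree ≥ 2 -/
lemma exists_step {S : Finset G.D} (hS : InvCl G S) (hdeg : MinDeg2 G S)
    {e : G.D} (he : e ∈ S) : ∃ e', Step G S e e' := by
  have hv : G.head e ∈ S.image G.head := Finset.mem_image_of_mem _ he
  have h2 : 2 ≤ degS G S (G.head e) := hdeg _ hv
  have he' : e ∈ S.filter (fun d => G.head d = G.head e) := by
    simp [Finset.mem_filter, he]
  have h2' : 1 < (S.filter (fun d => G.head d = G.head e)).card := by
    have : degS G S (G.head e) = (S.filter (fun d => G.head d = G.head e)).card := rfl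
    omega
  obtain ⟨a, ha, hane⟩ := Finset.exists_mem_ne h2' e
  rw [Finset.mem_filter] at ha
  refine ⟨G.inv a, hS a ha.1, ?_, ?_⟩
  · rw [tail_inv, ha.2]
  · intro hc
    exact hane (inv_injective hc)


lemma subGenus_empty : G.subGenusZ (∅ : Finset G.D) = 1 := by
  simp [Multigraph.subGenusZ]

/-- Main reachability theorem: in an inv-closed, connected, min-degree-2 dart set of
genus at least 2, every dart reaches every dart by a non-backtracking walk. -/
theorem reach_all {S : Finset G.D} (hS : InvCl G S) (hconn : ConnS G S)
    (hdeg : MinDeg2 G S) (hgen : 2 ≤ G.subGenusZ S) :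
    ∀ e ∈ S, ∀ f ∈ S, Relation.ReflTransGen (Step G S) e f := by
  classical
  have hne : S.Nonempty := by
    rcases S.eq_empty_or_nonempty with h | h
    · rw [h] at hgen; rw [subGenus_empty] at hgen; omega
    · exact h
  set A : G.D → Finset G.D :=
    fun g => Finset.univ.filter (fun h => Relation.ReflTransGen (Step G S) g h) with hA
  have hmemA : ∀ g h, h ∈ A g ↔ Relation.ReflTransGen (Step G S) g h := by
    intro g h; simp [hA]
  obtain ⟨c0, hc0S, hmin⟩ := Finset.exists_min_image S (fun g => (A g).card) hne
  set C := A c0 with hC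
  have hc0C : c0 ∈ C := (hmemA c0 c0).2 .refl
  have hCS : ∀ g ∈ C, g ∈ S := by
    intro g hg
    exact reach_mem hc0S ((hmemA c0 g).1 hg)
  have hAeq : ∀ g ∈ C, A g = C := by
    intro g hg
    have hsub : A g ⊆ C := by
      intro h hh
      exact (hmemA c0 h).2 (((hmemA c0 g).1 hg).trans ((hmemA g h).1 hh))
    exact Finset.eq_of_subset_of_card_le hsub (hmin g (hCS g hg))
  have hreachCC : ∀ g ∈ C, ∀ h ∈ C, Relation.ReflTransGen (Step G S) g h := by
    intro g hg h hh
    exact (hmemA g h).1 (by rw [hAeq g hg]; exact hh)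
  have hcont : ∀ c ∈ C, ∀ x ∈ S, G.head x = G.head c → x ≠ c → G.inv x ∈ C := by
    intro c hc x hx hhead hne'
    have hstep : Step G S c (G.inv x) := by
      refine ⟨hS x hx, ?_, ?_⟩
      · rw [tail_inv, hhead]
      · intro h; exact hne' (inv_injective h)
    exact (hmemA c0 _).2 (((hmemA c0 c).1 hc).tail hstep)
  have hpred : ∀ g ∈ C, ∃ p ∈ C, G.head p = G.tail g := by
    intro g hg
    obtain ⟨c1, hc1⟩ := exists_step hS hdeg hc0S
    have hc1C : c1 ∈ C := (hmemA c0 c1).2 (.single hc1)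
    have htg : Relation.TransGen (Step G S) c0 g :=
      Relation.TransGen.head' hc1 (hreachCC c1 hc1C g hg)
    obtain ⟨p, hp, hpg⟩ := Relation.TransGen.tail'_iff.1 htg
    exact ⟨p, (hmemA c0 p).2 hp, hpg.2.1.symm⟩
  by_cases hcase : ∃ c ∈ C, G.inv c ∈ C
  · -- C is closed under inv, hence C = S and we are done
    obtain ⟨c, hc, hic⟩ := hcase
    have hCinv : ∀ g ∈ C, G.inv g ∈ C := by
      intro g hg
      have h1 : Relation.ReflTransGen (Step G S) (G.inv c) (G.inv g) :=
        reach_rev hS (hCS g hg) (hreachCC g hg c hc)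
      exact (hmemA c0 _).2 (((hmemA c0 _).1 hic).trans h1)
    have hWclosed : ∀ v ∈ C.image G.head, ∀ x ∈ S, G.tail x = v → x ∈ C := by
      intro v hv x hx htx
      obtain ⟨c', hc', hc'v⟩ := Finset.mem_image.1 hv
      have hhix : G.head (G.inv x) = G.head c' := by rw [head_inv, htx, hc'v]
      by_cases hxc : G.inv x = c'
      · have : x = G.inv c' := by rw [← hxc, G.inv_inv]
        rw [this]; exact hCinv c' hc'
      · have := hcont c' hc' (G.inv x) (hS x hx) hhix hxc
        rwa [G.inv_inv] at this
    have hWall : ∀ w ∈ S.image G.head, w ∈ C.image G.head := by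
      intro w hw
      have hrtg : Relation.ReflTransGen (AdjS G S) (G.head c0) w :=
        hconn _ (Finset.mem_image_of_mem _ hc0S) w hw
      clear hw
      induction hrtg with
      | refl => exact Finset.mem_image_of_mem _ hc0C
      | @tail b c' hab hbc ih =>
          obtain ⟨x, hx, htx, hhx⟩ := hbc
          rw [← hhx]
          exact Finset.mem_image_of_mem _ (hWclosed b ih x hx htx)
    have hSC : ∀ x ∈ S, x ∈ C := by
      intro x hx
      obtain ⟨c', hc', hc'v⟩ := Finset.mem_image.1 (hWall _ (Finset.mem_image_of_mem _ hx))
      by_cases hxc : x = c'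
      · rw [hxc]; exact hc'
      · have := hcont c' hc' x hx hc'v.symm hxc
        have := hCinv _ this
        rwa [G.inv_inv] at this
    intro e he f hf
    exact hreachCC e (hSC e he) f (hSC f hf)
  · -- impossible by a counting argument
    exfalso
    push_neg at hcase
    have huniq : ∀ c ∈ C, ∀ c' ∈ C, G.head c = G.head c' → c = c' := by
      intro c hc c' hc' hh
      by_contra hne'
      exact hcase c' hc' ((G.inv_inv c') ▸ hcont c hc c' (hCS c' hc') hh.symm (Ne.symm hne') )
    have hWclosed : ∀ v ∈ C.image G.head, ∀ x ∈ S, G.tail x = v →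
        G.head x ∈ C.image G.head := by
      intro v hv x hx htx
      obtain ⟨c', hc', hc'v⟩ := Finset.mem_image.1 hv
      by_cases hxc : G.inv x = c'
      · have hx' : x = G.inv c' := by rw [← hxc, G.inv_inv]
        obtain ⟨p, hp, hph⟩ := hpred c' hc'
        rw [hx', head_inv, ← hph]
        exact Finset.mem_image_of_mem _ hp
      · have := hcont c' hc' (G.inv x) (hS x hx) (by rw [head_inv, htx, hc'v]) hxc
        rw [G.inv_inv] at this
        exact Finset.mem_image_of_mem _ this
    have hWall : ∀ w ∈ S.image G.head, w ∈ C.image G.head := by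
      intro w hw
      have hrtg : Relation.ReflTransGen (AdjS G S) (G.head c0) w :=
        hconn _ (Finset.mem_image_of_mem _ hc0S) w hw
      clear hw
      induction hrtg with
      | refl => exact Finset.mem_image_of_mem _ hc0C
      | @tail b c' hab hbc ih =>
          obtain ⟨x, hx, htx, hhx⟩ := hbc
          rw [← hhx]
          exact hWclosed b ih x hx htx
    have hcover : ∀ x ∈ S, x ∈ C ∪ C.image G.inv := by
      intro x hx
      obtain ⟨c', hc', hc'v⟩ :=
        Finset.mem_image.1 (hWall _ (Finset.mem_image_of_mem _ hx))
      by_cases hxc : x = c'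
      · exact Finset.mem_union.2 (Or.inl (hxc ▸ hc'))
      · have := hcont c' hc' x hx hc'v.symm hxc
        exact Finset.mem_union.2 (Or.inr (Finset.mem_image.2 ⟨G.inv x, this, G.inv_inv x⟩))
    have h1 : S.card ≤ 2 * C.card := by
      calc S.card ≤ (C ∪ C.image G.inv).card :=
            Finset.card_le_card (fun x hx => hcover x hx)
        _ ≤ C.card + (C.image G.inv).card := Finset.card_union_le _ _
        _ ≤ C.card + C.card := by
            have := Finset.card_image_le (s := C) (f := G.inv)
            omega
        _ = 2 * C.card := by ring
    have h2 : (C.image G.head).card = C.card :=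
      Finset.card_image_of_injOn (fun a ha b hb h => huniq a ha b hb h)
    have h3 : (C.image G.head).card ≤ (S.image G.head).card :=
      Finset.card_le_card (Finset.image_subset_image (fun g hg => hCS g hg))
    have hgen' := hgen
    rw [Multigraph.subGenusZ] at hgen'
    have h5 : ((S.image G.head).card : ℤ) + 1 ≤ (S.card : ℤ) / 2 := by omega
    have h6 := (Int.le_ediv_iff_mul_le (by norm_num : (0:ℤ) < 2)).1 h5
    omega

lemma invCl_even_card : ∀ (n : ℕ) (S : Finset G.D), S.card ≤ n → InvCl G S →
    Even S.card := by
  intro n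
  induction n with
  | zero =>
      intro S h _
      have : S.card = 0 := Nat.le_zero.1 h
      simp [this]
  | succ n ih =>
      intro S hle hS
      rcases S.eq_empty_or_nonempty with rfl | ⟨d, hd⟩
      · simp
      · have hid : G.inv d ∈ S := hS d hd
        have hdne : d ≠ G.inv d := Ne.symm (G.inv_ne d)
        set S' := S \ {d, G.inv d} with hS'def
        have hS' : InvCl G S' := by
          intro x hx
          rw [Finset.mem_sdiff] at hx ⊢
          refine ⟨hS x hx.1, ?_⟩
          intro hc
          apply hx.2
          simp only [Finset.mem_insert, Finset.mem_singleton] at hc ⊢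
          rcases hc with h | h
          · right; rw [← h, G.inv_inv]
          · left; exact inv_injective h
        have hsub : ({d, G.inv d} : Finset G.D) ⊆ S := by
          intro x hx
          simp only [Finset.mem_insert, Finset.mem_singleton] at hx
          rcases hx with rfl | rfl <;> assumption
        have hpair : ({d, G.inv d} : Finset G.D).card = 2 := Finset.card_pair hdne
        have hcard : S'.card = S.card - 2 := by
          rw [hS'def, Finset.card_sdiff_of_subset hsub, hpair]
        have h2le : 2 ≤ S.card := by
          have := Finset.one_lt_card.2 ⟨d, hd, G.inv d, hid, hdne⟩
          omega
        obtain ⟨k, hk⟩ := ih S' (by omega) hS'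
        exact ⟨k + 1, by omega⟩

lemma card_eq_sum_degS (S : Finset G.D) :
    S.card = ∑ v ∈ S.image G.head, degS G S v :=
  Finset.card_eq_sum_card_fiberwise (fun x hx => Finset.mem_image_of_mem _ hx)

/-- Rigidity: a subgraph of the same genus inside a connected min-degree-2 subgraph
must be the whole thing. -/
lemma rigidity {S T : Finset G.D} (hST : S ⊆ T) (hSinv : InvCl G S)
    (hTinv : InvCl G T) (hTdeg : MinDeg2 G T) (hTconn : ConnS G T)
    (hSne : S.Nonempty)
    (hgen : G.subGenusZ S = G.subGenusZ T) : S = T := by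
  classical
  set VS := S.image G.head with hVS
  set VT := T.image G.head with hVT
  have hV : VS ⊆ VT := Finset.image_subset_image hST
  have hdegle : ∀ v, degS G S v ≤ degS G T v := by
    intro v
    exact Finset.card_le_card (Finset.filter_subset_filter _ hST)
  have hsplit : ∑ v ∈ VT \ VS, degS G T v + ∑ v ∈ VS, degS G T v = T.card := by
    rw [card_eq_sum_degS T, ← hVT, Finset.sum_sdiff hV]
  have hS2 : S.card = ∑ v ∈ VS, degS G S v := card_eq_sum_degS S
  have hsum1 : ∑ v ∈ VS, degS G S v ≤ ∑ v ∈ VS, degS G T v :=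
    Finset.sum_le_sum (fun v _ => hdegle v)
  have hsum2 : 2 * (VT \ VS).card ≤ ∑ v ∈ VT \ VS, degS G T v := by
    calc 2 * (VT \ VS).card = ∑ _v ∈ VT \ VS, 2 := by
          rw [Finset.sum_const, smul_eq_mul, mul_comm]
      _ ≤ ∑ v ∈ VT \ VS, degS G T v :=
          Finset.sum_le_sum (fun v hv => hTdeg v (Finset.mem_sdiff.1 hv).1)
  have hcarddiff : (VT \ VS).card = VT.card - VS.card := Finset.card_sdiff_of_subset hV
  have hVle : VS.card ≤ VT.card := Finset.card_le_card hV
  obtain ⟨p, hp⟩ := invCl_even_card S.card S le_rfl hSinv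
  obtain ⟨q, hq⟩ := invCl_even_card T.card T le_rfl hTinv
  rw [Multigraph.subGenusZ, Multigraph.subGenusZ, ← hVS, ← hVT] at hgen
  have hkey : T.card = S.card + 2 * (VT.card - VS.card) := by omega
  have heq : ∑ v ∈ VS, degS G S v = ∑ v ∈ VS, degS G T v := by omega
  have hdegeq : ∀ v ∈ VS, degS G S v = degS G T v := by
    intro v hv
    by_contra hne
    have hlt : degS G S v < degS G T v := lt_of_le_of_ne (hdegle v) hne
    have := Finset.sum_lt_sum (fun i (_ : i ∈ VS) => hdegle i) ⟨v, hv, hlt⟩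
    omega
  have hTSheads : ∀ x ∈ T, G.head x ∈ VS → x ∈ S := by
    intro x hx hhx
    by_contra hxS
    have hsub2 : S.filter (fun d => G.head d = G.head x) ⊆
        T.filter (fun d => G.head d = G.head x) := Finset.filter_subset_filter _ hST
    have hlt : degS G S (G.head x) < degS G T (G.head x) := by
      apply Finset.card_lt_card
      rw [Finset.ssubset_iff_of_subset hsub2]
      exact ⟨x, Finset.mem_filter.2 ⟨hx, rfl⟩, fun hmem => hxS (Finset.mem_filter.1 hmem).1⟩
    have := hdegeq _ hhx
    omega
  have hclosed : ∀ v ∈ VS, ∀ x ∈ T, G.tail x = v → G.head x ∈ VS := by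
    intro v hv x hx htx
    have hix : G.inv x ∈ T := hTinv x hx
    have hh : G.head (G.inv x) ∈ VS := by
      rw [head_inv, htx]; exact hv
    have hxS : G.inv x ∈ S := hTSheads _ hix hh
    have hx2 : x ∈ S := by
      have := hSinv _ hxS; rwa [G.inv_inv] at this
    exact Finset.mem_image_of_mem _ hx2
  obtain ⟨d0, hd0⟩ := hSne
  have hv0 : G.head d0 ∈ VS := Finset.mem_image_of_mem _ hd0
  have hVTS : ∀ w ∈ VT, w ∈ VS := by
    intro w hw
    have hrtg := hTconn _ (hV hv0) w hw
    clear hw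
    induction hrtg with
    | refl => exact hv0
    | @tail b c' hab hbc ih =>
        obtain ⟨x, hx, htx, hhx⟩ := hbc
        rw [← hhx]
        exact hclosed b ih x hx htx
  apply Finset.Subset.antisymm hST
  intro x hx
  exact hTSheads x hx (hVTS _ (Finset.mem_image_of_mem _ hx))


lemma prune : ∀ (n : ℕ) (S : Finset G.D), S.card ≤ n → InvCl G S → ConnS G S →
    G.subGenusZ S = G.genusZ → 2 ≤ G.genusZ → (∀ S', Good G S' → S' ⊆ S) →
    ∃ T, InvCl G T ∧ ConnS G T ∧ G.subGenusZ T = G.genusZ ∧ MinDeg2 G T ∧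
      (∀ S', Good G S' → S' ⊆ T) := by
  intro n
  induction n with
  | zero =>
      intro S hle _ _ hgen hg2 _
      exfalso
      have h0 : S = ∅ := Finset.card_eq_zero.1 (Nat.le_zero.1 hle)
      rw [h0, subGenus_empty] at hgen
      omega
  | succ n ih =>
      intro S hle hinv hconn hgen hg2 hgood
      by_cases hdeg : MinDeg2 G S
      · exact ⟨S, hinv, hconn, hgen, hdeg, hgood⟩
      · simp only [MinDeg2, not_forall] at hdeg
        obtain ⟨v, hv, hlt⟩ := hdeg
        have hlt : degS G S v < 2 := by omega
        obtain ⟨d, hd, hdv⟩ := Finset.mem_image.1 hv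
        have hdf : d ∈ S.filter (fun x => G.head x = v) := Finset.mem_filter.2 ⟨hd, hdv⟩
        have hdeg1 : degS G S v = 1 := by
          have h1 : 1 ≤ degS G S v := Finset.card_pos.2 ⟨d, hdf⟩
          omega
        have huniqd : ∀ x ∈ S, G.head x = v → x = d := by
          intro x hx hxv
          by_contra hne
          have : 1 < (S.filter (fun x => G.head x = v)).card :=
            Finset.one_lt_card.2 ⟨x, Finset.mem_filter.2 ⟨hx, hxv⟩, d, hdf, hne⟩
          rw [degS] at hdeg1; omega
        have hid : G.inv d ∈ S := hinv d hd
        have hnl : G.tail d ≠ v := by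
          intro h
          have h1 : G.head (G.inv d) = v := by rw [head_inv, h]
          exact G.inv_ne d (huniqd _ hid h1)
        have htdv : G.tail d ∈ S.image G.head := by
          refine Finset.mem_image.2 ⟨G.inv d, hid, ?_⟩
          rw [head_inv]
        -- tail d has degree at least 2, otherwise S is a single edge, genus 0
        have hd2 : 2 ≤ degS G S (G.tail d) := by
          by_contra hlt2
          push_neg at hlt2
          have hidf : G.inv d ∈ S.filter (fun x => G.head x = G.tail d) :=
            Finset.mem_filter.2 ⟨hid, by rw [head_inv]⟩
          have hdeg1' : degS G S (G.tail d) = 1 := by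
            have h1 : 1 ≤ degS G S (G.tail d) := Finset.card_pos.2 ⟨G.inv d, hidf⟩
            omega
          have huniqd' : ∀ x ∈ S, G.head x = G.tail d → x = G.inv d := by
            intro x hx hxv
            by_contra hne
            have : 1 < (S.filter (fun x => G.head x = G.tail d)).card :=
              Finset.one_lt_card.2 ⟨x, Finset.mem_filter.2 ⟨hx, hxv⟩, G.inv d, hidf, hne⟩
            rw [degS] at hdeg1'; omega
          -- the vertex set {v, tail d} is adjacency-closed
          have hclosed : ∀ w, (w = v ∨ w = G.tail d) → ∀ x ∈ S, G.tail x = w →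
              (G.head x = v ∨ G.head x = G.tail d) := by
            intro w hw x hx htx
            rcases hw with rfl | rfl
            · have : G.inv x = d := huniqd _ (hinv x hx) (by rw [head_inv, htx])
              have hx' : x = G.inv d := by rw [← this, G.inv_inv]
              right; rw [hx', head_inv]
            · have : G.inv x = G.inv d := huniqd' _ (hinv x hx) (by rw [head_inv, htx])
              have hx' : x = d := inv_injective this
              left; rw [hx', hdv]
          have hall : ∀ w ∈ S.image G.head, w = v ∨ w = G.tail d := by
            intro w hw
            have hrtg := hconn v hv w hw
            clear hw
            induction hrtg with
            | refl => left; rfl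
            | @tail b c' hab hbc ihh =>
                obtain ⟨x, hx, htx, hhx⟩ := hbc
                rw [← hhx]
                exact hclosed b ihh x hx htx
          have hSeq : S = {d, G.inv d} := by
            apply Finset.Subset.antisymm
            · intro x hx
              rcases hall _ (Finset.mem_image_of_mem _ hx) with h | h
              · simp [huniqd x hx h]
              · simp [huniqd' x hx h]
            · intro x hx
              simp only [Finset.mem_insert, Finset.mem_singleton] at hx
              rcases hx with rfl | rfl <;> assumption
          have himg : S.image G.head = {v, G.tail d} := by
            rw [hSeq]
            rw [Finset.image_insert, Finset.image_singleton, head_inv, hdv]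
          have hdne : d ≠ G.inv d := Ne.symm (G.inv_ne d)
          rw [Multigraph.subGenusZ, himg, hSeq, Finset.card_pair hdne,
            Finset.card_pair (Ne.symm hnl)] at hgen
          norm_num at hgen
          omega
        -- remove the pendant edge
        set S' := S \ {d, G.inv d} with hS'def
        have hinv' : InvCl G S' := by
          intro x hx
          rw [Finset.mem_sdiff] at hx ⊢
          refine ⟨hinv x hx.1, ?_⟩
          intro hc
          apply hx.2
          simp only [Finset.mem_insert, Finset.mem_singleton] at hc ⊢
          rcases hc with h | h
          · right; rw [← h, G.inv_inv]
          · left; exact inv_injective h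
        have hdne : d ≠ G.inv d := Ne.symm (G.inv_ne d)
        have hsub : ({d, G.inv d} : Finset G.D) ⊆ S := by
          intro x hx
          simp only [Finset.mem_insert, Finset.mem_singleton] at hx
          rcases hx with rfl | rfl <;> assumption
        have hcard : S'.card = S.card - 2 := by
          rw [hS'def, Finset.card_sdiff_of_subset hsub, Finset.card_pair hdne]
        have h2le : 2 ≤ S.card := by
          have := Finset.one_lt_card.2 ⟨d, hd, G.inv d, hid, hdne⟩
          omega
        have hmemS' : ∀ x, x ∈ S' ↔ x ∈ S ∧ x ≠ d ∧ x ≠ G.inv d := by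
          intro x
          rw [hS'def, Finset.mem_sdiff]
          simp only [Finset.mem_insert, Finset.mem_singleton]
          tauto
        have himg : S'.image G.head = S.image G.head \ {v} := by
          ext w
          constructor
          · intro hw
            obtain ⟨x, hx, hxw⟩ := Finset.mem_image.1 hw
            rw [hmemS'] at hx
            rw [Finset.mem_sdiff, Finset.mem_singleton]
            refine ⟨Finset.mem_image.2 ⟨x, hx.1, hxw⟩, ?_⟩
            intro hc
            exact hx.2.1 (huniqd x hx.1 (by rw [hxw, hc]))
          · intro hw
            rw [Finset.mem_sdiff, Finset.mem_singleton] at hw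
            obtain ⟨x, hx, hxw⟩ := Finset.mem_image.1 hw.1
            by_cases hx1 : x = d
            · exact absurd (by rw [← hxw, hx1, hdv]) (Ne.symm hw.2)
            · by_cases hx2 : x = G.inv d
              · -- w = tail d; use the second dart at tail d
                have hwt : w = G.tail d := by rw [← hxw, hx2, head_inv]
                obtain ⟨y, hy, hyne⟩ := Finset.exists_mem_ne
                  (by rw [degS] at hd2; omega :
                    1 < (S.filter (fun x => G.head x = G.tail d)).card) (G.inv d)
                rw [Finset.mem_filter] at hy
                have hyd : y ≠ d := by
                  intro hc
                  rw [hc, hdv] at hy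
                  exact hnl hy.2.symm
                exact Finset.mem_image.2 ⟨y, (hmemS' y).2 ⟨hy.1, hyd, hyne⟩,
                  by rw [hy.2, hwt]⟩
              · exact Finset.mem_image.2 ⟨x, (hmemS' x).2 ⟨hx, hx1, hx2⟩, hxw⟩
        have h1n : 1 ≤ (S.image G.head).card := Finset.card_pos.2 ⟨v, hv⟩
        have hgen' : G.subGenusZ S' = G.genusZ := by
          rw [Multigraph.subGenusZ, himg, hcard,
            Finset.card_sdiff_of_subset (Finset.singleton_subset_iff.2 hv), Finset.card_singleton]
          rw [Multigraph.subGenusZ] at hgen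
          omega
        have hconn' : ConnS G S' := by
          set f : G.V → G.V := fun w => if w = v then G.tail d else w with hf
          have hmap : ∀ w1 w2, Relation.ReflTransGen (AdjS G S) w1 w2 →
              Relation.ReflTransGen (AdjS G S') (f w1) (f w2) := by
            intro w1 w2 h
            induction h with
            | refl => exact .refl
            | @tail b c' hab hbc ihh =>
                obtain ⟨x, hx, htx, hhx⟩ := hbc
                by_cases hx1 : x = d
                · have hfb : f b = G.tail d := by
                    rw [hf, ← htx, hx1]
                    simp [hnl]
                  have hfc : f c' = G.tail d := by
                    rw [hf, ← hhx, hx1, hdv]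
                    simp
                  rw [hfc, ← hfb]; exact ihh
                · by_cases hx2 : x = G.inv d
                  · have hfb : f b = G.tail d := by
                      rw [hf, ← htx, hx2, tail_inv, hdv]
                      simp
                    have hfc : f c' = G.tail d := by
                      rw [hf, ← hhx, hx2, head_inv]
                      simp [hnl]
                    rw [hfc, ← hfb]; exact ihh
                  · have hbv : b ≠ v := by
                      intro hc
                      have : G.inv x = d := huniqd _ (hinv x hx)
                        (by rw [head_inv, htx, hc])
                      exact hx2 (by rw [← this, G.inv_inv])
                    have hcv : c' ≠ v := by
                      intro hc
                      exact hx1 (huniqd x hx (by rw [hhx, hc]))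
                    have hfb : f b = b := by rw [hf]; simp [hbv]
                    have hfc : f c' = c' := by rw [hf]; simp [hcv]
                    rw [hfc]
                    refine ihh.tail ?_
                    rw [hfb]
                    exact ⟨x, (hmemS' x).2 ⟨hx, hx1, hx2⟩, htx, hhx⟩
          intro w1 hw1 w2 hw2
          rw [himg, Finset.mem_sdiff, Finset.mem_singleton] at hw1 hw2
          have := hmap w1 w2 (hconn w1 hw1.1 w2 hw2.1)
          have hf1 : f w1 = w1 := by rw [hf]; simp [hw1.2]
          have hf2 : f w2 = w2 := by rw [hf]; simp [hw2.2]
          rwa [hf1, hf2] at this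
        have hgood' : ∀ S'', Good G S'' → S'' ⊆ S' := by
          intro S'' hg
          have hsub'' : S'' ⊆ S := hgood S'' hg
          have hdnot : d ∉ S'' := by
            intro hdS
            obtain ⟨d', hd', htd', hned'⟩ := hg.2 d hdS
            have h1 : G.inv d' ∈ S := hinv _ (hsub'' hd')
            have h2 : G.head (G.inv d') = v := by rw [head_inv, htd', hdv]
            have h3 : G.inv d' = d := huniqd _ h1 h2
            exact hned' (by rw [← h3, G.inv_inv])
          intro x hx
          rw [hmemS' x]
          refine ⟨hsub'' hx, ?_, ?_⟩
          · intro hc; exact hdnot (hc ▸ hx)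
          · intro hc
            apply hdnot
            have := hg.1 x hx
            rw [hc, G.inv_inv] at this
            exact this
        exact ih S' (by omega) hinv' hconn' hgen' hg2 hgood'


end MGAux

open MGAux

/-- a connected finite graph of genus at least `2` contains a unique
subgraph of the same genus which is edge-walk-connected. -/
theorem exists_unique_edge_walk_connected_core (G : Multigraph) (hG : G.Connected)
    (hg : 2 ≤ G.genusZ) :
    ∃! S : Finset G.D,
      (∀ d ∈ S, G.inv d ∈ S) ∧
      G.subGenusZ S = G.genusZ ∧
      G.EdgeWalkConnected S := by
  classical
  have hv1 : 0 < Fintype.card G.V := Fintype.card_pos_iff.2 hG.1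
  have hD4 : (2 : ℤ) * 2 ≤ (Fintype.card G.D : ℤ) := by
    rw [Multigraph.genusZ] at hg
    exact (Int.le_ediv_iff_mul_le (by norm_num : (0:ℤ) < 2)).1 (by omega)
  have hDne : Nonempty G.D := Fintype.card_pos_iff.1 (by omega)
  obtain ⟨d0⟩ := hDne
  have hsurj : ∀ v : G.V, ∃ d : G.D, G.head d = v := by
    intro v
    by_contra hc
    push_neg at hc
    have hrtg := hG.2 v (G.head d0)
    rcases Relation.ReflTransGen.cases_head hrtg with h | ⟨c, ⟨x, hx1, hx2⟩, _⟩
    · exact hc d0 h.symm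
    · exact hc (G.inv x) (by rw [head_inv, hx1])
  have himgu : (Finset.univ : Finset G.D).image G.head = Finset.univ := by
    apply Finset.eq_univ_of_forall
    intro v
    obtain ⟨d, hd⟩ := hsurj v
    exact Finset.mem_image.2 ⟨d, Finset.mem_univ d, hd⟩
  have hconnu : ConnS G (Finset.univ : Finset G.D) := by
    intro v _ w _
    exact Relation.ReflTransGen.mono (r := G.Adj) (p := AdjS G Finset.univ) (fun a b hab => by
      obtain ⟨d, h1, h2⟩ := hab
      exact ⟨d, Finset.mem_univ d, h1, h2⟩) _ _ (hG.2 v w)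
  have hgenu : G.subGenusZ (Finset.univ : Finset G.D) = G.genusZ := by
    rw [Multigraph.subGenusZ, Multigraph.genusZ, himgu, Finset.card_univ,
      Finset.card_univ]
  obtain ⟨T, hTinv, hTconn, hTgen, hTdeg, hTgood⟩ :=
    prune (Finset.univ : Finset G.D).card (Finset.univ : Finset G.D) le_rfl
      (fun d _ => Finset.mem_univ _) hconnu hgenu hg
      (fun S' _ => Finset.subset_univ S')
  refine ⟨T, ⟨hTinv, hTgen, ?_⟩, ?_⟩
  · intro e he e' he'
    exact reach_to_walk he
      (reach_all hTinv hTconn hTdeg (by rw [hTgen]; exact hg) e he e' he')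
  · rintro S ⟨hSinv, hSgen, hSewc⟩
    have hSgood : Good G S := by
      refine ⟨hSinv, ?_⟩
      intro d hd
      obtain ⟨w, hmem, hhead, hlast, hchain⟩ := hSewc d hd (G.inv d) (hSinv d hd)
      cases w with
      | nil => simp at hhead
      | cons a t =>
          have ha : a = d := by simpa using hhead
          subst ha
          cases t with
          | nil =>
              simp at hlast
              exact absurd hlast (Ne.symm (G.inv_ne a))
          | cons b t' =>
              have hR := (List.isChain_cons_cons.1 hchain).1
              exact ⟨b, hmem b (by simp), hR.1, hR.2⟩
    have hsub : S ⊆ T := hTgood S hSgood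
    have hSne : S.Nonempty := by
      rcases S.eq_empty_or_nonempty with rfl | h
      · rw [subGenus_empty] at hSgen; omega
      · exact h
    exact rigidity hsub hSinv hTinv hTdeg hTconn hSne (by rw [hSgen, hTgen])
end
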